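/- Let (s,t) be an edge with s<t. Suppose an execution contains two transitions A_0 ↦ A_1 and A_2 ↦ A_3 and a configuration A_4, with A_1 ↦* A_2 and A_3 ↦* A_4, such that: in A_0 ↦ A_1 node s executes a t-rule; in A_2 ↦ A_3 node t executes the Reset rule; and in A_4 it holds that (p_t, m_t) = (s,2). Then the edge (s,t) is in a correct state in A_4. -/
import Mathlib


/-!
Formal model of the self-stabilizing maximal-matching algorithm in the
link-register model under read/write atomicity.

Nodes form a finite simple graph `G` on a vertex type `V` whose linear order
plays the role of the distinct identifiers.  A configuration records, for each
node `u`, its pointer `p u : Option V` (`none` = null), its lock variable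
`m u : Fin 3`, and for each (directed) link a register `r u v : RegFlag × Fin 3`.
-/

inductive RegFlag where
  | Idle | You | Other
deriving DecidableEq

abbrev RegVal : Type := RegFlag × Fin 3

inductive Rule (V : Type) where
  | write (a : V)
  | seduction (a : V)
  | marriage (a : V)
  | increase
  | reset
deriving DecidableEq

structure Config (V : Type) where
  p : V → Option V
  m : V → Fin 3
  r : V → V → RegVal

variable {V : Type}

def correctRegisterValue [DecidableEq V] (C : Config V) (u a : V) : RegVal :=
  match C.p u with
  | none => (RegFlag.Idle, 0)
  | some b => if b = a then (RegFlag.You, C.m u) else (RegFlag.Other, C.m u)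

def PRabandonment [LinearOrder V] (C : Config V) (u : V) : Prop :=
  ∃ v, C.p u = some v ∧
    (((C.r v u).1 ≠ RegFlag.You ∧ (v < u ∨ C.m u ≠ 0)) ∨
     (C.r v u = (RegFlag.Other, 2) ∧ u < v))

def PRreset [LinearOrder V] (C : Config V) (u : V) : Prop :=
  ∃ v, C.p u = some v ∧ (C.r v u).1 = RegFlag.You ∧
    ((C.m u = 0 ∧ (C.r v u).2 = 2) ∨
     (C.m u = 2 ∧ (C.r v u).2 = 0) ∨
     (C.m u = 0 ∧ (C.r v u).2 = 1 ∧ v < u) ∨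
     (C.m u = 1 ∧ (C.r v u).2 = 0 ∧ u < v) ∨
     (C.m u = 1 ∧ (C.r v u).2 = 2 ∧ u < v) ∨
     (C.m u = 2 ∧ (C.r v u).2 = 1 ∧ v < u))

/-- The guard of each rule of node `u` in configuration `C`. -/
def eligible [LinearOrder V] (G : SimpleGraph V) (C : Config V) (u : V) : Rule V → Prop
  | .write a => G.Adj u a ∧ C.r u a ≠ correctRegisterValue C u a
  | .seduction a => G.Adj u a ∧ C.p u = none ∧ C.r u a = correctRegisterValue C u a ∧
      C.r a u = (RegFlag.Idle, 0) ∧ u < a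
  | .marriage a => G.Adj u a ∧ C.p u = none ∧ C.r u a = correctRegisterValue C u a ∧
      C.r a u = (RegFlag.You, 0) ∧ a < u
  | .increase => ∃ v, C.p u = some v ∧ C.r u v = correctRegisterValue C u v ∧
      (C.r v u).1 = RegFlag.You ∧
      ((C.m u = 0 ∧ ((u < v ∧ (C.r v u).2 = 1) ∨ (v < u ∧ (C.r v u).2 = 0))) ∨
       (C.m u = 1 ∧ ((u < v ∧ (C.r v u).2 = 1) ∨ (v < u ∧ (C.r v u).2 = 2))))
  | .reset => ∃ v, C.p u = some v ∧ C.r u v = correctRegisterValue C u v ∧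
      (PRabandonment C u ∨ PRreset C u)

/-- Simultaneous application of (at most) one rule per node.  `A u = some R`
means node `u` executes rule `R`; each action only modifies the data owned by
the acting node. -/
def step [DecidableEq V] (C : Config V) (A : V → Option (Rule V)) : Config V where
  p u :=
    match A u with
    | some (Rule.seduction a) => some a
    | some (Rule.marriage a) => some a
    | some Rule.reset => none
    | _ => C.p u
  m u :=
    match A u with
    | some (Rule.seduction _) => 0
    | some (Rule.marriage _) => 0
    | some Rule.reset => 0
    | some Rule.increase => C.m u + 1
    | _ => C.m u
  r u a :=
    match A u with
    | some (Rule.write b) => if a = b then correctRegisterValue C u a else C.r u a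
    | _ => C.r u a

/-- An execution `C_0, A_0, C_1, A_1, …, C_T`: at each transition `i < T`, a
nonempty set of eligible rules (at most one per node) is executed
simultaneously. -/
structure Execution [LinearOrder V] (G : SimpleGraph V) where
  T : ℕ
  conf : ℕ → Config V
  act : ℕ → V → Option (Rule V)
  act_nonempty : ∀ i < T, ∃ u, (act i u).isSome
  act_eligible : ∀ i < T, ∀ u R, act i u = some R → eligible G (conf i) u R
  conf_succ : ∀ i < T, conf (i + 1) = step (conf i) (act i)

/-- A configuration is stable if no rule is eligible at any node. -/
def stableConfig [LinearOrder V] (G : SimpleGraph V) (C : Config V) : Prop :=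
  ∀ u R, ¬ eligible G C u R

/-- The edge `(s,t)` (with `s < t` intended) is in state `(You, α, β)`. -/
def edgeState (C : Config V) (s t : V) (α β : Fin 3) : Prop :=
  C.p s = some t ∧ C.p t = some s ∧ C.m s = α ∧ C.m t = β

def updatedCorrectState (C : Config V) (s t : V) (α β : Fin 3) : Prop :=
  edgeState C s t α β ∧ C.r s t = (RegFlag.You, α) ∧ C.r t s = (RegFlag.You, β) ∧
    ((α, β) = ((0 : Fin 3), (0 : Fin 3)) ∨ (α, β) = (0, 1) ∨ (α, β) = (1, 1) ∨
     (α, β) = (2, 1) ∨ (α, β) = (2, 2))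

def toUpdateCorrectState (C : Config V) (s t : V) (α β : Fin 3) : Prop :=
  edgeState C s t α β ∧
    ((((α, β) = ((0 : Fin 3), (1 : Fin 3)) ∨ (α, β) = (2, 2)) ∧
        C.r s t = (RegFlag.You, α) ∧ C.r t s = (RegFlag.You, β - 1)) ∨
     (((α, β) = ((1 : Fin 3), (1 : Fin 3)) ∨ (α, β) = (2, 1)) ∧
        C.r s t = (RegFlag.You, α - 1) ∧ C.r t s = (RegFlag.You, β)))

def correctState (C : Config V) (s t : V) (α β : Fin 3) : Prop :=
  updatedCorrectState C s t α β ∨ toUpdateCorrectState C s t α β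

/-- Node `u` executes a `v`-rule in transition `k`: one of `Write(v)`,
`Seduction(v)`, `Marriage(v)`, a `v`-`Increase` or a `v`-`Reset`. -/
def execVRule [LinearOrder V] {G : SimpleGraph V} (E : Execution G) (k : ℕ) (u v : V) : Prop :=
  k < E.T ∧
    (E.act k u = some (Rule.write v) ∨ E.act k u = some (Rule.seduction v) ∨
     E.act k u = some (Rule.marriage v) ∨
     ((E.act k u = some Rule.increase ∨ E.act k u = some Rule.reset) ∧
       (E.conf k).p u = some v))


namespace Stmt15Aux

abbrev Q4 := ℕ × ℕ × ℕ × ℕ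
abbrev AS := Q4 × Q4

def correctA (p m : ℕ) : ℕ × ℕ := if p = 0 then (0, 0) else (p, m)

def sOpts : AS → List Q4
  | ((ps,ms,rf,rv),(_,_,tf,tv)) =>
    [(ps,ms,rf,rv), (ps, ms, correctA ps ms)]
    ++ (if ps = 0 ∧ rf = 0 ∧ rv = 0 ∧ tf = 0 ∧ tv = 0 then [(1,0,rf,rv)] else [])
    ++ (if ps = 0 then [(2,0,rf,rv)] else [])
    ++ (if ps = 1 ∧ rf = 1 ∧ rv = ms ∧ tf = 1 ∧ tv = 1 ∧ (ms = 0 ∨ ms = 1)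
        then [(1,(ms+1)%3,rf,rv)] else [])
    ++ (if ps = 1 ∧ rf = 1 ∧ rv = ms ∧ ((¬ tf = 1 ∧ ¬ ms = 0) ∨ (tf = 2 ∧ tv = 2) ∨
          (tf = 1 ∧ ((ms = 0 ∧ tv = 2) ∨ (ms = 2 ∧ tv = 0) ∨ (ms = 1 ∧ tv = 0) ∨ (ms = 1 ∧ tv = 2))))
        then [(0,0,rf,rv)] else [])
    ++ (if ps = 2 then [(2,(ms+1)%3,rf,rv),(0,0,rf,rv)] else [])

def sTRuleOpts : AS → List Q4
  | ((ps,ms,rf,rv),(_,_,tf,tv)) =>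
    [(ps, ms, correctA ps ms)]
    ++ (if ps = 0 ∧ rf = 0 ∧ rv = 0 ∧ tf = 0 ∧ tv = 0 then [(1,0,rf,rv)] else [])
    ++ (if ps = 1 ∧ rf = 1 ∧ rv = ms ∧ tf = 1 ∧ tv = 1 ∧ (ms = 0 ∨ ms = 1)
        then [(1,(ms+1)%3,rf,rv)] else [])
    ++ (if ps = 1 ∧ rf = 1 ∧ rv = ms ∧ ((¬ tf = 1 ∧ ¬ ms = 0) ∨ (tf = 2 ∧ tv = 2) ∨
          (tf = 1 ∧ ((ms = 0 ∧ tv = 2) ∨ (ms = 2 ∧ tv = 0) ∨ (ms = 1 ∧ tv = 0) ∨ (ms = 1 ∧ tv = 2))))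
        then [(0,0,rf,rv)] else [])

def tResetOpts : AS → List Q4
  | ((_,_,rf,rv),(pt,mt,tf,tv)) =>
    (if pt = 1 ∧ tf = 1 ∧ tv = mt ∧ (¬ rf = 1 ∨ (rf = 1 ∧ ((mt = 0 ∧ rv = 2) ∨ (mt = 2 ∧ rv = 0) ∨
          (mt = 0 ∧ rv = 1) ∨ (mt = 2 ∧ rv = 1)))) then [(0,0,tf,tv)] else [])
    ++ (if pt = 2 then [(0,0,tf,tv)] else [])

def tOpts (σ : AS) : List Q4 :=
  match σ with
  | ((_,_,rf,rv),(pt,mt,tf,tv)) =>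
    [(pt,mt,tf,tv), (pt, mt, correctA pt mt)]
    ++ (if pt = 0 ∧ tf = 0 ∧ tv = 0 ∧ rf = 1 ∧ rv = 0 then [(1,0,tf,tv)] else [])
    ++ (if pt = 0 then [(2,0,tf,tv)] else [])
    ++ (if pt = 1 ∧ tf = 1 ∧ tv = mt ∧ rf = 1 ∧ ((mt = 0 ∧ rv = 0) ∨ (mt = 1 ∧ rv = 2))
        then [(1,(mt+1)%3,tf,tv)] else [])
    ++ (if pt = 2 then [(2,(mt+1)%3,tf,tv)] else [])
    ++ tResetOpts σ

def enc : AS → ℕ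
  | ((ps,ms,rf,rv),(pt,mt,tf,tv)) =>
    ps + 3*(ms + 3*(rf + 3*(rv + 3*(pt + 3*(mt + 3*(tf + 3*tv))))))

def N1 : Nat := 6555658119587197620615932843247736898997600225383927985483737852240865222068639956114675250472780259347943898618067175042987301225676404552122928524208779329165050872796487432081394250040254978014217411126996669507965976790894519736332756720412076677293212661880185071470100175895240356916728192216809990351445269469959844554243155791048316350219301723953270616629384113029646563538554569435030816624723475992616354083817488839261656259439481699973653003622882803644633465256096488511442594279886005687175131517029616969668953901988186150479985943476179574656042323275235694926408175174631546640878727813601447244302311002360740652971650676183422341481973737766314188824959599772469481641281572728959554775586044676582102145301918943447259151376713617363119667895199635034789597345556427366241855402165415777412796243705985893946121747832085233374563316246750173722039409774262115225935280648765317181414229481455353210448559427616207728887474620120936602075600739080414707782332234067234210379027671772785119138493709833592886272594128117893543209779742567100166499978224451109999886741002641204079635751202156983780619344986980475842784142639707301518124962831032115940818846026827176021817193763341771068522704919515435463010965073785758535678748480151188284781669534514505053343268242739962758184860938729814630738929241951283923579486141545738007373334216026933913373442443058119561111848082999580108127559727587450697189783106862007794753451720581246287407676815397207780044759916689281290878442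561515315170854709158249294182401810502791588403423308404881736882479239899339621618141269577420570470656213646539408329770898327415587023428612595902136328335064556089740657731198487195585560890027034057439622481727248941535286490984999544948933879174131720501022381915184775045717227193062008047899395738987830721594762323382112118853918318039827396543573132784262704266874758368615541904044168972640263099952188008002384862804911970373715787963717330916535534054901444463
def N2 : Nat := 6555658119587197620615930131891087392002025136367682157071220602146294942863231241968143849221101277524774621223705401109673010138902693349443280434977136983581723254935542150125828370297941659674646497700878379209097041420025503705411408643090310393482466332544254760198580912585001064119506820860760052030506741872064012741283115186440058852528055089712059623465417416843119711675788779735932316873833865614925562694069297676727550801782812766348920075390654773994550400872671511020331643649784962828299361612027571975943425086478735359318489003778088973464425230179865764635868085997113146943030651079872251478566314766343949309097552292770182050926988114216689317365981935271258074924035698637920548254332802585855334621023398846512007922127623149314546683239675050571057224118772330065028428448968847958219835674929159655639214741220172773664368382997379924825423265140788434396387854614843267749146154957811127128815212951616649989761368611087366134884837431981006820338693898587179319942527224152482152359420612236573260391718906229017347300277271494900128510917604808829444354343511228659722137724130126425983325178862860461150080230244886744899132914134447995428590361262841545445513838652148410910147545979102171143958563778375381860565186453280870299807342645964927273664887871394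176603306033304136356169200047098045817281243717742161714224075764803303827706979117068042810524492607620006503379281765082204250418905875314944704197732016929740051570602514183289849091572066503325228110413630416121060623055550697445126086383701979293589929447026201510352285866553011486852407320917823631464488110739508800861291654994400459300019654457357931975935669171008891925556262246214401197082353470625400408065718880927754686767661389442626918303744991487879306433266759777810508929597737323518275721765684708195424540816146352845743042242653781864142015416594946855075806931601534076190371637783830792259405467193670785867949682437661119990071246348072577963059604423602031

def inv1 (σ : AS) : Bool := N1 / 2 ^ enc σ % 2 == 1
def inv2 (σ : AS) : Bool := N2 / 2 ^ enc σ % 2 == 1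

set_option synthInstance.maxHeartbeats 10000000 in
set_option synthInstance.maxSize 100000 in
set_option maxHeartbeats 40000000 in
set_option maxRecDepth 10000 in
lemma F1 : ∀ a b c d e f g h : Fin 3,
    ∀ x ∈ sTRuleOpts ((a.val,b.val,c.val,d.val),(e.val,f.val,g.val,h.val)), ∀ y ∈ tOpts ((a.val,b.val,c.val,d.val),(e.val,f.val,g.val,h.val)),
    inv1 (x,y) = true := by decide

set_option synthInstance.maxHeartbeats 10000000 in
set_option synthInstance.maxSize 100000 in
set_option maxHeartbeats 40000000 in
set_option maxRecDepth 10000 in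
lemma F2 : ∀ a b c d e f g h : Fin 3,
    inv1 ((a.val,b.val,c.val,d.val),(e.val,f.val,g.val,h.val)) = true →
    ∀ x ∈ sOpts ((a.val,b.val,c.val,d.val),(e.val,f.val,g.val,h.val)), ∀ y ∈ tOpts ((a.val,b.val,c.val,d.val),(e.val,f.val,g.val,h.val)),
    inv1 (x,y) = true := by decide

set_option synthInstance.maxHeartbeats 10000000 in
set_option synthInstance.maxSize 100000 in
set_option maxHeartbeats 40000000 in
set_option maxRecDepth 10000 in
lemma F3 : ∀ a b c d e f g h : Fin 3,
    inv1 ((a.val,b.val,c.val,d.val),(e.val,f.val,g.val,h.val)) = true →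
    ∀ x ∈ sOpts ((a.val,b.val,c.val,d.val),(e.val,f.val,g.val,h.val)), ∀ y ∈ tResetOpts ((a.val,b.val,c.val,d.val),(e.val,f.val,g.val,h.val)),
    inv2 (x,y) = true := by decide

set_option synthInstance.maxHeartbeats 10000000 in
set_option synthInstance.maxSize 100000 in
set_option maxHeartbeats 40000000 in
set_option maxRecDepth 10000 in
lemma F4 : ∀ a b c d e f g h : Fin 3,
    inv2 ((a.val,b.val,c.val,d.val),(e.val,f.val,g.val,h.val)) = true →
    ∀ x ∈ sOpts ((a.val,b.val,c.val,d.val),(e.val,f.val,g.val,h.val)), ∀ y ∈ tOpts ((a.val,b.val,c.val,d.val),(e.val,f.val,g.val,h.val)),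
    inv2 (x,y) = true := by decide

set_option synthInstance.maxHeartbeats 10000000 in
set_option synthInstance.maxSize 100000 in
set_option maxHeartbeats 40000000 in
set_option maxRecDepth 10000 in
lemma F5 : ∀ a b c d e f g h : Fin 3,
    inv2 ((a.val,b.val,c.val,d.val),(e.val,f.val,g.val,h.val)) = true → e.val = 1 → f.val = 2 →
    a.val = 1 ∧ b.val = 2 ∧ c.val = 1 ∧ d.val = 2 ∧ g.val = 1 ∧ (h.val = 1 ∨ h.val = 2) := by decide


/-! ### Membership lemmas for the abstract option lists -/

lemma mem_sOpts_idle (ps ms rf rv pt mt tf tv : ℕ) :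
    (ps,ms,rf,rv) ∈ sOpts ((ps,ms,rf,rv),(pt,mt,tf,tv)) := by simp [sOpts]

lemma mem_sOpts_write (ps ms rf rv pt mt tf tv : ℕ) :
    (ps, ms, (correctA ps ms).1, (correctA ps ms).2) ∈ sOpts ((ps,ms,rf,rv),(pt,mt,tf,tv)) := by
  simp [sOpts]

lemma mem_sOpts_sed (ps ms rf rv pt mt tf tv : ℕ)
    (h1 : ps = 0) (h2 : rf = 0) (h3 : rv = 0) (h4 : tf = 0) (h5 : tv = 0) :
    (1,0,rf,rv) ∈ sOpts ((ps,ms,rf,rv),(pt,mt,tf,tv)) := by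
  subst h1 h2 h3 h4 h5; simp [sOpts]

lemma mem_sOpts_other (ps ms rf rv pt mt tf tv : ℕ) (h1 : ps = 0) :
    (2,0,rf,rv) ∈ sOpts ((ps,ms,rf,rv),(pt,mt,tf,tv)) := by
  subst h1; simp [sOpts]

lemma mem_sOpts_inc (ps ms rf rv pt mt tf tv : ℕ)
    (h1 : ps = 1) (h2 : rf = 1) (h3 : rv = ms) (h4 : tf = 1) (h5 : tv = 1)
    (h6 : ms = 0 ∨ ms = 1) :
    (1,(ms+1)%3,rf,rv) ∈ sOpts ((ps,ms,rf,rv),(pt,mt,tf,tv)) := by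
  subst h1 h2 h3 h4 h5; simp [sOpts, h6]

lemma mem_sOpts_reset (ps ms rf rv pt mt tf tv : ℕ)
    (h1 : ps = 1) (h2 : rf = 1) (h3 : rv = ms)
    (h4 : (¬ tf = 1 ∧ ¬ ms = 0) ∨ (tf = 2 ∧ tv = 2) ∨
          (tf = 1 ∧ ((ms = 0 ∧ tv = 2) ∨ (ms = 2 ∧ tv = 0) ∨ (ms = 1 ∧ tv = 0) ∨ (ms = 1 ∧ tv = 2)))) :
    (0,0,rf,rv) ∈ sOpts ((ps,ms,rf,rv),(pt,mt,tf,tv)) := by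
  subst h1 h2 h3; simp [sOpts, h4]

lemma mem_sOpts_incO (ps ms rf rv pt mt tf tv : ℕ) (h1 : ps = 2) :
    (2,(ms+1)%3,rf,rv) ∈ sOpts ((ps,ms,rf,rv),(pt,mt,tf,tv)) := by
  subst h1; simp [sOpts]

lemma mem_sOpts_resetO (ps ms rf rv pt mt tf tv : ℕ) (h1 : ps = 2) :
    (0,0,rf,rv) ∈ sOpts ((ps,ms,rf,rv),(pt,mt,tf,tv)) := by
  subst h1; simp [sOpts]

lemma mem_sT_write (ps ms rf rv pt mt tf tv : ℕ) :
    (ps, ms, (correctA ps ms).1, (correctA ps ms).2) ∈ sTRuleOpts ((ps,ms,rf,rv),(pt,mt,tf,tv)) := by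
  simp [sTRuleOpts]

lemma mem_sT_sed (ps ms rf rv pt mt tf tv : ℕ)
    (h1 : ps = 0) (h2 : rf = 0) (h3 : rv = 0) (h4 : tf = 0) (h5 : tv = 0) :
    (1,0,rf,rv) ∈ sTRuleOpts ((ps,ms,rf,rv),(pt,mt,tf,tv)) := by
  subst h1 h2 h3 h4 h5; simp [sTRuleOpts]

lemma mem_sT_inc (ps ms rf rv pt mt tf tv : ℕ)
    (h1 : ps = 1) (h2 : rf = 1) (h3 : rv = ms) (h4 : tf = 1) (h5 : tv = 1)
    (h6 : ms = 0 ∨ ms = 1) :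
    (1,(ms+1)%3,rf,rv) ∈ sTRuleOpts ((ps,ms,rf,rv),(pt,mt,tf,tv)) := by
  subst h1 h2 h3 h4 h5; simp [sTRuleOpts, h6]

lemma mem_sT_reset (ps ms rf rv pt mt tf tv : ℕ)
    (h1 : ps = 1) (h2 : rf = 1) (h3 : rv = ms)
    (h4 : (¬ tf = 1 ∧ ¬ ms = 0) ∨ (tf = 2 ∧ tv = 2) ∨
          (tf = 1 ∧ ((ms = 0 ∧ tv = 2) ∨ (ms = 2 ∧ tv = 0) ∨ (ms = 1 ∧ tv = 0) ∨ (ms = 1 ∧ tv = 2)))) :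
    (0,0,rf,rv) ∈ sTRuleOpts ((ps,ms,rf,rv),(pt,mt,tf,tv)) := by
  subst h1 h2 h3; simp [sTRuleOpts, h4]

lemma mem_tOpts_idle (ps ms rf rv pt mt tf tv : ℕ) :
    (pt,mt,tf,tv) ∈ tOpts ((ps,ms,rf,rv),(pt,mt,tf,tv)) := by simp [tOpts]

lemma mem_tOpts_write (ps ms rf rv pt mt tf tv : ℕ) :
    (pt, mt, (correctA pt mt).1, (correctA pt mt).2) ∈ tOpts ((ps,ms,rf,rv),(pt,mt,tf,tv)) := by
  simp [tOpts]

lemma mem_tOpts_marriage (ps ms rf rv pt mt tf tv : ℕ)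
    (h1 : pt = 0) (h2 : tf = 0) (h3 : tv = 0) (h4 : rf = 1) (h5 : rv = 0) :
    (1,0,tf,tv) ∈ tOpts ((ps,ms,rf,rv),(pt,mt,tf,tv)) := by
  subst h1 h2 h3 h4 h5; simp [tOpts]

lemma mem_tOpts_other (ps ms rf rv pt mt tf tv : ℕ) (h1 : pt = 0) :
    (2,0,tf,tv) ∈ tOpts ((ps,ms,rf,rv),(pt,mt,tf,tv)) := by
  subst h1; simp [tOpts]

lemma mem_tOpts_inc (ps ms rf rv pt mt tf tv : ℕ)
    (h1 : pt = 1) (h2 : tf = 1) (h3 : tv = mt) (h4 : rf = 1)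
    (h5 : (mt = 0 ∧ rv = 0) ∨ (mt = 1 ∧ rv = 2)) :
    (1,(mt+1)%3,tf,tv) ∈ tOpts ((ps,ms,rf,rv),(pt,mt,tf,tv)) := by
  subst h1 h2 h3 h4; simp [tOpts, h5]

lemma mem_tOpts_incO (ps ms rf rv pt mt tf tv : ℕ) (h1 : pt = 2) :
    (2,(mt+1)%3,tf,tv) ∈ tOpts ((ps,ms,rf,rv),(pt,mt,tf,tv)) := by
  subst h1; simp [tOpts]

lemma mem_tR_reset (ps ms rf rv pt mt tf tv : ℕ)
    (h1 : pt = 1) (h2 : tf = 1) (h3 : tv = mt)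
    (h4 : ¬ rf = 1 ∨ (rf = 1 ∧ ((mt = 0 ∧ rv = 2) ∨ (mt = 2 ∧ rv = 0) ∨
          (mt = 0 ∧ rv = 1) ∨ (mt = 2 ∧ rv = 1)))) :
    (0,0,tf,tv) ∈ tResetOpts ((ps,ms,rf,rv),(pt,mt,tf,tv)) := by
  subst h1 h2 h3; simp [tResetOpts, h4]

lemma mem_tR_resetO (ps ms rf rv pt mt tf tv : ℕ) (h1 : pt = 2) :
    (0,0,tf,tv) ∈ tResetOpts ((ps,ms,rf,rv),(pt,mt,tf,tv)) := by
  subst h1; simp [tResetOpts]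

lemma tResetOpts_subset {σ : AS} {x : Q4} (h : x ∈ tResetOpts σ) : x ∈ tOpts σ := by
  obtain ⟨⟨ps,ms,rf,rv⟩,⟨pt,mt,tf,tv⟩⟩ := σ
  simp only [tOpts, List.mem_append]
  exact Or.inr h

/-! ### Abstraction of concrete configurations -/

section Bridge

variable {V : Type} [LinearOrder V]

def pEnc (x : Option V) (w : V) : ℕ :=
  match x with
  | none => 0
  | some y => if y = w then 1 else 2

def fEnc : RegFlag → ℕ
  | RegFlag.Idle => 0
  | RegFlag.You => 1
  | RegFlag.Other => 2

def sPart (C : Config V) (s t : V) : Q4 :=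
  (pEnc (C.p s) t, (C.m s).val, fEnc (C.r s t).1, ((C.r s t).2).val)

def tPart (C : Config V) (s t : V) : Q4 :=
  (pEnc (C.p t) s, (C.m t).val, fEnc (C.r t s).1, ((C.r t s).2).val)

def absC (C : Config V) (s t : V) : AS := (sPart C s t, tPart C s t)

@[simp] lemma v0 : ((0 : Fin 3)).val = 0 := rfl
@[simp] lemma v1 : ((1 : Fin 3)).val = 1 := rfl
@[simp] lemma v2 : ((2 : Fin 3)).val = 2 := rfl

lemma pEnc_none (w : V) : pEnc none w = 0 := rfl
lemma pEnc_some_eq (w : V) : pEnc (some w) w = 1 := by simp [pEnc]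
lemma pEnc_some_ne {y w : V} (h : y ≠ w) : pEnc (some y) w = 2 := by simp [pEnc, h]
lemma pEnc_lt (x : Option V) (w : V) : pEnc x w < 3 := by
  cases x with
  | none => simp [pEnc]
  | some y => by_cases h : y = w <;> simp [pEnc, h]
lemma pEnc_eq_one {x : Option V} {w : V} (h : pEnc x w = 1) : x = some w := by
  cases x with
  | none => simp [pEnc] at h
  | some y =>
      by_cases hy : y = w
      · rw [hy]
      · simp [pEnc, hy] at h

lemma fEnc_lt (f : RegFlag) : fEnc f < 3 := by cases f <;> simp [fEnc]
lemma fEnc_eq_one {f : RegFlag} (h : fEnc f = 1) : f = RegFlag.You := by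
  cases f <;> simp [fEnc] at h ⊢
lemma fEnc_ne_one {f : RegFlag} (h : f ≠ RegFlag.You) : ¬ fEnc f = 1 := by
  cases f <;> simp [fEnc] at h ⊢

lemma val_eq_of_eq {x c : Fin 3} (h : x = c) : x.val = c.val := congrArg Fin.val h
lemma val_ne_of_ne {x c : Fin 3} (h : x ≠ c) : x.val ≠ c.val := fun hh => h (Fin.ext hh)
lemma eq_of_val_eq' {x c : Fin 3} (h : x.val = c.val) : x = c := Fin.ext h

lemma correctRV_none {C : Config V} {u a : V} (h : C.p u = none) :
    correctRegisterValue C u a = (RegFlag.Idle, 0) := by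
  unfold correctRegisterValue; rw [h]

lemma correctRV_some_eq {C : Config V} {u a : V} (h : C.p u = some a) :
    correctRegisterValue C u a = (RegFlag.You, C.m u) := by
  unfold correctRegisterValue; rw [h]; simp

lemma correctRV_some_ne {C : Config V} {u a v : V} (h : C.p u = some v) (hv : v ≠ a) :
    correctRegisterValue C u a = (RegFlag.Other, C.m u) := by
  unfold correctRegisterValue; rw [h]; simp [hv]

lemma correct_abs (C : Config V) (u a : V) :
    (fEnc (correctRegisterValue C u a).1, ((correctRegisterValue C u a).2).val)
      = correctA (pEnc (C.p u) a) (C.m u).val := by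
  cases hp : C.p u with
  | none => rw [correctRV_none hp]; simp [pEnc, fEnc, correctA]
  | some b =>
      by_cases hb : b = a
      · subst hb
        rw [correctRV_some_eq hp]
        simp [pEnc, fEnc, correctA]
      · rw [correctRV_some_ne hp hb]
        simp [pEnc, fEnc, correctA, hb]

lemma sPart_step_mem {G : SimpleGraph V} (C : Config V) (A : V → Option (Rule V)) (s t : V)
    (hst : s < t) (helig : ∀ u R, A u = some R → eligible G C u R) :
    sPart (step C A) s t ∈ sOpts (absC C s t) := by
  show sPart (step C A) s t ∈ sOpts
    ((pEnc (C.p s) t, (C.m s).val, fEnc (C.r s t).1, ((C.r s t).2).val),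
     (pEnc (C.p t) s, (C.m t).val, fEnc (C.r t s).1, ((C.r t s).2).val))
  cases hA : A s with
  | none =>
      have key : sPart (step C A) s t
          = (pEnc (C.p s) t, (C.m s).val, fEnc (C.r s t).1, ((C.r s t).2).val) := by
        simp [sPart, step, hA]
      rw [key]; exact mem_sOpts_idle _ _ _ _ _ _ _ _
  | some R =>
    cases R with
    | write b =>
        by_cases hb : t = b
        · subst hb
          have key : sPart (step C A) s t
              = (pEnc (C.p s) t, (C.m s).val,
                 (correctA (pEnc (C.p s) t) (C.m s).val).1,
                 (correctA (pEnc (C.p s) t) (C.m s).val).2) := by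
            have hc := correct_abs C s t
            have hc1 := congrArg Prod.fst hc
            have hc2 := congrArg Prod.snd hc
            simp only [] at hc1 hc2
            simp [sPart, step, hA, hc1, hc2]
          rw [key]; exact mem_sOpts_write _ _ _ _ _ _ _ _
        · have key : sPart (step C A) s t
              = (pEnc (C.p s) t, (C.m s).val, fEnc (C.r s t).1, ((C.r s t).2).val) := by
            simp [sPart, step, hA, hb]
          rw [key]; exact mem_sOpts_idle _ _ _ _ _ _ _ _
    | seduction b =>
        obtain ⟨hadj, hpn, hrc, hrb, hlt⟩ := helig s _ hA
        by_cases hb : b = t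
        · rw [hb] at hrc hrb
          have hre : C.r s t = (RegFlag.Idle, 0) := by rw [hrc, correctRV_none hpn]
          have key : sPart (step C A) s t
              = (1, 0, fEnc (C.r s t).1, ((C.r s t).2).val) := by
            simp [sPart, step, hA, pEnc, hb]
          rw [key]
          exact mem_sOpts_sed _ _ _ _ _ _ _ _ (by rw [hpn]; rfl)
            (by rw [hre]; rfl) (by rw [hre]; rfl)
            (by rw [hrb]; rfl) (by rw [hrb]; rfl)
        · have key : sPart (step C A) s t
              = (2, 0, fEnc (C.r s t).1, ((C.r s t).2).val) := by
            simp [sPart, step, hA, pEnc, hb]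
          rw [key]
          exact mem_sOpts_other _ _ _ _ _ _ _ _ (by rw [hpn]; rfl)
    | marriage b =>
        obtain ⟨hadj, hpn, hrc, hrb, hlt⟩ := helig s _ hA
        have hb : b ≠ t := fun h => absurd hlt (by rw [h]; exact not_lt.mpr hst.le)
        have key : sPart (step C A) s t
            = (2, 0, fEnc (C.r s t).1, ((C.r s t).2).val) := by
          simp [sPart, step, hA, pEnc, hb]
        rw [key]
        exact mem_sOpts_other _ _ _ _ _ _ _ _ (by rw [hpn]; rfl)
    | increase =>
        obtain ⟨v, hpv, hrc, hflag, hdisj⟩ := helig s _ hA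
        have hm' : (step C A).m s = C.m s + 1 := by simp [step, hA]
        have hval : ((C.m s + 1 : Fin 3)).val = ((C.m s).val + 1) % 3 := by
          rw [Fin.val_add]; rfl
        by_cases hv : v = t
        · rw [hv] at hpv hrc hflag hdisj
          have hre : C.r s t = (RegFlag.You, C.m s) := by rw [hrc, correctRV_some_eq hpv]
          have key : sPart (step C A) s t
              = (1, ((C.m s).val + 1) % 3, fEnc (C.r s t).1, ((C.r s t).2).val) := by
            simp [sPart, step, hA, hpv, pEnc, hval]
          rw [key]
          have hcase : C.m s = 0 ∨ C.m s = 1 := by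
            rcases hdisj with ⟨h0, hh⟩ | ⟨h1, hh⟩
            · exact Or.inl h0
            · exact Or.inr h1
          have htv : (C.r t s).2 = 1 := by
            rcases hdisj with ⟨h0, hh⟩ | ⟨h1, hh⟩ <;>
              rcases hh with ⟨_, h⟩ | ⟨hlt', _⟩ <;>
              first
                | exact h
                | exact absurd hlt' (not_lt.mpr hst.le)
          exact mem_sOpts_inc _ _ _ _ _ _ _ _
            (by rw [hpv]; exact pEnc_some_eq t) (by rw [hre]; rfl) (by rw [hre]) (by rw [hflag]; rfl)
            (by rw [htv]; rfl)
            (by rcases hcase with h | h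
                · exact Or.inl (by rw [h]; rfl)
                · exact Or.inr (by rw [h]; rfl))
        · have key : sPart (step C A) s t
              = (2, ((C.m s).val + 1) % 3, fEnc (C.r s t).1, ((C.r s t).2).val) := by
            simp [sPart, step, hA, hpv, pEnc, hv, hval]
          rw [key]
          exact mem_sOpts_incO _ _ _ _ _ _ _ _ (by rw [hpv]; exact pEnc_some_ne hv)
    | reset =>
        obtain ⟨v, hpv, hrc, hpr⟩ := helig s _ hA
        have key : sPart (step C A) s t
            = (0, 0, fEnc (C.r s t).1, ((C.r s t).2).val) := by
          simp [sPart, step, hA, pEnc]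
        rw [key]
        by_cases hv : v = t
        · rw [hv] at hpv hrc
          have hre : C.r s t = (RegFlag.You, C.m s) := by rw [hrc, correctRV_some_eq hpv]
          refine mem_sOpts_reset _ _ _ _ _ _ _ _ ?_ (by rw [hre]; rfl) (by rw [hre]) ?_
          · rw [hpv]; exact pEnc_some_eq t
          · -- translate PRabandonment / PRreset
            rcases hpr with ⟨w, hw, hcase⟩ | ⟨w, hw, hflag, hcase⟩
            · -- PRabandonment
              rw [hpv] at hw
              injection hw with hw
              rw [← hw] at hcase
              rcases hcase with ⟨hnot, hor⟩ | ⟨heq, _⟩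
              · refine Or.inl ⟨fEnc_ne_one hnot, ?_⟩
                rcases hor with hlt' | hne
                · exact absurd hlt' (not_lt.mpr hst.le)
                · exact fun h => hne (eq_of_val_eq' (h.trans rfl))
              · refine Or.inr (Or.inl ⟨?_, ?_⟩)
                · rw [heq]; rfl
                · rw [heq]; rfl
            · -- PRreset
              rw [hpv] at hw
              injection hw with hw
              rw [← hw] at hflag hcase
              refine Or.inr (Or.inr ⟨by rw [hflag]; rfl, ?_⟩)
              rcases hcase with ⟨h1, h2⟩ | ⟨h1, h2⟩ | ⟨h1, h2, h3⟩ | ⟨h1, h2, h3⟩ | ⟨h1, h2, h3⟩ | ⟨h1, h2, h3⟩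
              · exact Or.inl ⟨by rw [h1]; rfl, by rw [h2]; rfl⟩
              · exact Or.inr (Or.inl ⟨by rw [h1]; rfl, by rw [h2]; rfl⟩)
              · exact absurd h3 (not_lt.mpr hst.le)
              · exact Or.inr (Or.inr (Or.inl ⟨by rw [h1]; rfl, by rw [h2]; rfl⟩))
              · exact Or.inr (Or.inr (Or.inr ⟨by rw [h1]; rfl, by rw [h2]; rfl⟩))
              · exact absurd h3 (not_lt.mpr hst.le)
        · have hps : pEnc (C.p s) t = 2 := by rw [hpv]; exact pEnc_some_ne hv
          exact mem_sOpts_resetO _ _ _ _ _ _ _ _ hps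

lemma tReset_core {G : SimpleGraph V} (C : Config V) (A : V → Option (Rule V)) (s t : V)
    (hst : s < t) (helig : ∀ u R, A u = some R → eligible G C u R)
    (hA : A t = some Rule.reset) :
    tPart (step C A) s t ∈ tResetOpts (absC C s t) := by
  show tPart (step C A) s t ∈ tResetOpts
    ((pEnc (C.p s) t, (C.m s).val, fEnc (C.r s t).1, ((C.r s t).2).val),
     (pEnc (C.p t) s, (C.m t).val, fEnc (C.r t s).1, ((C.r t s).2).val))
  obtain ⟨v, hpv, hrc, hpr⟩ := helig t _ hA
  have key : tPart (step C A) s t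
      = (0, 0, fEnc (C.r t s).1, ((C.r t s).2).val) := by
    simp [tPart, step, hA, pEnc]
  rw [key]
  by_cases hv : v = s
  · rw [hv] at hpv hrc
    have hre : C.r t s = (RegFlag.You, C.m t) := by rw [hrc, correctRV_some_eq hpv]
    refine mem_tR_reset _ _ _ _ _ _ _ _ ?_ (by rw [hre]; rfl) (by rw [hre]) ?_
    · rw [hpv]; exact pEnc_some_eq s
    · rcases hpr with ⟨w, hw, hcase⟩ | ⟨w, hw, hflag, hcase⟩
      · -- PRabandonment for t
        rw [hpv] at hw
        injection hw with hw
        rw [← hw] at hcase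
        rcases hcase with ⟨hnot, _⟩ | ⟨_, hlt'⟩
        · exact Or.inl (fEnc_ne_one hnot)
        · exact absurd hlt' (not_lt.mpr hst.le)
      · -- PRreset for t
        rw [hpv] at hw
        injection hw with hw
        rw [← hw] at hflag hcase
        refine Or.inr ⟨by rw [hflag]; rfl, ?_⟩
        rcases hcase with ⟨h1, h2⟩ | ⟨h1, h2⟩ | ⟨h1, h2, h3⟩ | ⟨h1, h2, h3⟩ | ⟨h1, h2, h3⟩ | ⟨h1, h2, h3⟩
        · exact Or.inl ⟨by rw [h1]; rfl, by rw [h2]; rfl⟩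
        · exact Or.inr (Or.inl ⟨by rw [h1]; rfl, by rw [h2]; rfl⟩)
        · exact Or.inr (Or.inr (Or.inl ⟨by rw [h1]; rfl, by rw [h2]; rfl⟩))
        · exact absurd h3 (not_lt.mpr hst.le)
        · exact absurd h3 (not_lt.mpr hst.le)
        · exact Or.inr (Or.inr (Or.inr ⟨by rw [h1]; rfl, by rw [h2]; rfl⟩))
  · have hps : pEnc (C.p t) s = 2 := by rw [hpv]; exact pEnc_some_ne hv
    exact mem_tR_resetO _ _ _ _ _ _ _ _ hps

lemma tPart_step_mem {G : SimpleGraph V} (C : Config V) (A : V → Option (Rule V)) (s t : V)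
    (hst : s < t) (helig : ∀ u R, A u = some R → eligible G C u R) :
    tPart (step C A) s t ∈ tOpts (absC C s t) := by
  show tPart (step C A) s t ∈ tOpts
    ((pEnc (C.p s) t, (C.m s).val, fEnc (C.r s t).1, ((C.r s t).2).val),
     (pEnc (C.p t) s, (C.m t).val, fEnc (C.r t s).1, ((C.r t s).2).val))
  cases hA : A t with
  | none =>
      have key : tPart (step C A) s t
          = (pEnc (C.p t) s, (C.m t).val, fEnc (C.r t s).1, ((C.r t s).2).val) := by
        simp [tPart, step, hA]
      rw [key]; exact mem_tOpts_idle _ _ _ _ _ _ _ _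
  | some R =>
    cases R with
    | write b =>
        by_cases hb : s = b
        · subst hb
          have key : tPart (step C A) s t
              = (pEnc (C.p t) s, (C.m t).val,
                 (correctA (pEnc (C.p t) s) (C.m t).val).1,
                 (correctA (pEnc (C.p t) s) (C.m t).val).2) := by
            have hc := correct_abs C t s
            have hc1 := congrArg Prod.fst hc
            have hc2 := congrArg Prod.snd hc
            simp only [] at hc1 hc2
            simp [tPart, step, hA, hc1, hc2]
          rw [key]; exact mem_tOpts_write _ _ _ _ _ _ _ _
        · have key : tPart (step C A) s t
              = (pEnc (C.p t) s, (C.m t).val, fEnc (C.r t s).1, ((C.r t s).2).val) := by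
            simp [tPart, step, hA, hb]
          rw [key]; exact mem_tOpts_idle _ _ _ _ _ _ _ _
    | seduction b =>
        obtain ⟨hadj, hpn, hrc, hrb, hlt⟩ := helig t _ hA
        have hb : b ≠ s := fun h => absurd hlt (by rw [h]; exact not_lt.mpr hst.le)
        have key : tPart (step C A) s t
            = (2, 0, fEnc (C.r t s).1, ((C.r t s).2).val) := by
          simp [tPart, step, hA, pEnc, hb]
        rw [key]
        exact mem_tOpts_other _ _ _ _ _ _ _ _ (by rw [hpn]; rfl)
    | marriage b =>
        obtain ⟨hadj, hpn, hrc, hrb, hlt⟩ := helig t _ hA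
        by_cases hb : b = s
        · rw [hb] at hrc hrb
          have hre : C.r t s = (RegFlag.Idle, 0) := by rw [hrc, correctRV_none hpn]
          have key : tPart (step C A) s t
              = (1, 0, fEnc (C.r t s).1, ((C.r t s).2).val) := by
            simp [tPart, step, hA, pEnc, hb]
          rw [key]
          exact mem_tOpts_marriage _ _ _ _ _ _ _ _ (by rw [hpn]; rfl)
            (by rw [hre]; rfl) (by rw [hre]; rfl)
            (by rw [hrb]; rfl) (by rw [hrb]; rfl)
        · have key : tPart (step C A) s t
              = (2, 0, fEnc (C.r t s).1, ((C.r t s).2).val) := by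
            simp [tPart, step, hA, pEnc, hb]
          rw [key]
          exact mem_tOpts_other _ _ _ _ _ _ _ _ (by rw [hpn]; rfl)
    | increase =>
        obtain ⟨v, hpv, hrc, hflag, hdisj⟩ := helig t _ hA
        have hval : ((C.m t + 1 : Fin 3)).val = ((C.m t).val + 1) % 3 := by
          rw [Fin.val_add]; rfl
        by_cases hv : v = s
        · rw [hv] at hpv hrc hflag hdisj
          have hre : C.r t s = (RegFlag.You, C.m t) := by rw [hrc, correctRV_some_eq hpv]
          have key : tPart (step C A) s t
              = (1, ((C.m t).val + 1) % 3, fEnc (C.r t s).1, ((C.r t s).2).val) := by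
            simp [tPart, step, hA, hpv, pEnc, hval]
          rw [key]
          have hcase : (C.m t = 0 ∧ (C.r s t).2 = 0) ∨ (C.m t = 1 ∧ (C.r s t).2 = 2) := by
            rcases hdisj with ⟨h0, hh⟩ | ⟨h1, hh⟩ <;>
              rcases hh with ⟨hlt', _⟩ | ⟨_, h⟩
            · exact absurd hlt' (not_lt.mpr hst.le)
            · exact Or.inl ⟨h0, h⟩
            · exact absurd hlt' (not_lt.mpr hst.le)
            · exact Or.inr ⟨h1, h⟩
          exact mem_tOpts_inc _ _ _ _ _ _ _ _
            (by rw [hpv]; exact pEnc_some_eq s) (by rw [hre]; rfl) (by rw [hre])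
            (by rw [hflag]; rfl)
            (by rcases hcase with ⟨h1, h2⟩ | ⟨h1, h2⟩
                · exact Or.inl ⟨by rw [h1]; rfl, by rw [h2]; rfl⟩
                · exact Or.inr ⟨by rw [h1]; rfl, by rw [h2]; rfl⟩)
        · have key : tPart (step C A) s t
              = (2, ((C.m t).val + 1) % 3, fEnc (C.r t s).1, ((C.r t s).2).val) := by
            simp [tPart, step, hA, hpv, pEnc, hv, hval]
          rw [key]
          exact mem_tOpts_incO _ _ _ _ _ _ _ _ (by rw [hpv]; exact pEnc_some_ne hv)
    | reset =>
        exact tResetOpts_subset (tReset_core C A s t hst helig hA)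

lemma sPart_step_trule {G : SimpleGraph V} (C : Config V) (A : V → Option (Rule V)) (s t : V)
    (hst : s < t) (helig : ∀ u R, A u = some R → eligible G C u R)
    (hr : A s = some (Rule.write t) ∨ A s = some (Rule.seduction t) ∨
      A s = some (Rule.marriage t) ∨
      ((A s = some Rule.increase ∨ A s = some Rule.reset) ∧ C.p s = some t)) :
    sPart (step C A) s t ∈ sTRuleOpts (absC C s t) := by
  show sPart (step C A) s t ∈ sTRuleOpts
    ((pEnc (C.p s) t, (C.m s).val, fEnc (C.r s t).1, ((C.r s t).2).val),
     (pEnc (C.p t) s, (C.m t).val, fEnc (C.r t s).1, ((C.r t s).2).val))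
  rcases hr with hA | hA | hA | ⟨hA | hA, hps⟩
  · -- write t
    have key : sPart (step C A) s t
        = (pEnc (C.p s) t, (C.m s).val,
           (correctA (pEnc (C.p s) t) (C.m s).val).1,
           (correctA (pEnc (C.p s) t) (C.m s).val).2) := by
      have hc := correct_abs C s t
      have hc1 := congrArg Prod.fst hc
      have hc2 := congrArg Prod.snd hc
      simp only [] at hc1 hc2
      simp [sPart, step, hA, hc1, hc2]
    rw [key]; exact mem_sT_write _ _ _ _ _ _ _ _
  · -- seduction t
    obtain ⟨hadj, hpn, hrc, hrb, hlt⟩ := helig s _ hA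
    have hre : C.r s t = (RegFlag.Idle, 0) := by rw [hrc, correctRV_none hpn]
    have key : sPart (step C A) s t
        = (1, 0, fEnc (C.r s t).1, ((C.r s t).2).val) := by
      simp [sPart, step, hA, pEnc]
    rw [key]
    exact mem_sT_sed _ _ _ _ _ _ _ _ (by rw [hpn]; rfl)
      (by rw [hre]; rfl) (by rw [hre]; rfl)
      (by rw [hrb]; rfl) (by rw [hrb]; rfl)
  · -- marriage t : impossible since s < t
    obtain ⟨hadj, hpn, hrc, hrb, hlt⟩ := helig s _ hA
    exact absurd hlt (not_lt.mpr hst.le)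
  · -- increase with p s = some t
    obtain ⟨v, hpv, hrc, hflag, hdisj⟩ := helig s _ hA
    have hv : v = t := by rw [hps] at hpv; injection hpv with h; exact h.symm
    rw [hv] at hpv hrc hflag hdisj
    have hre : C.r s t = (RegFlag.You, C.m s) := by rw [hrc, correctRV_some_eq hpv]
    have hval : ((C.m s + 1 : Fin 3)).val = ((C.m s).val + 1) % 3 := by
      rw [Fin.val_add]; rfl
    have key : sPart (step C A) s t
        = (1, ((C.m s).val + 1) % 3, fEnc (C.r s t).1, ((C.r s t).2).val) := by
      simp [sPart, step, hA, hpv, pEnc, hval]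
    rw [key]
    have hcase : C.m s = 0 ∨ C.m s = 1 := by
      rcases hdisj with ⟨h0, _⟩ | ⟨h1, _⟩
      · exact Or.inl h0
      · exact Or.inr h1
    have htv : (C.r t s).2 = 1 := by
      rcases hdisj with ⟨h0, hh⟩ | ⟨h1, hh⟩ <;>
        rcases hh with ⟨_, h⟩ | ⟨hlt', _⟩ <;>
        first
          | exact h
          | exact absurd hlt' (not_lt.mpr hst.le)
    exact mem_sT_inc _ _ _ _ _ _ _ _
      (by rw [hpv]; exact pEnc_some_eq t) (by rw [hre]; rfl) (by rw [hre])
      (by rw [hflag]; rfl) (by rw [htv]; rfl)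
      (by rcases hcase with h | h
          · exact Or.inl (by rw [h]; rfl)
          · exact Or.inr (by rw [h]; rfl))
  · -- reset with p s = some t
    obtain ⟨v, hpv, hrc, hpr⟩ := helig s _ hA
    have hv : v = t := by rw [hps] at hpv; injection hpv with h; exact h.symm
    rw [hv] at hpv hrc
    have hre : C.r s t = (RegFlag.You, C.m s) := by rw [hrc, correctRV_some_eq hpv]
    have key : sPart (step C A) s t
        = (0, 0, fEnc (C.r s t).1, ((C.r s t).2).val) := by
      simp [sPart, step, hA, pEnc]
    rw [key]
    refine mem_sT_reset _ _ _ _ _ _ _ _ ?_ (by rw [hre]; rfl) (by rw [hre]) ?_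
    · rw [hpv]; exact pEnc_some_eq t
    · rcases hpr with ⟨w, hw, hcase⟩ | ⟨w, hw, hflag, hcase⟩
      · rw [hpv] at hw
        injection hw with hw
        rw [← hw] at hcase
        rcases hcase with ⟨hnot, hor⟩ | ⟨heq, _⟩
        · refine Or.inl ⟨fEnc_ne_one hnot, ?_⟩
          rcases hor with hlt' | hne
          · exact absurd hlt' (not_lt.mpr hst.le)
          · exact fun h => hne (eq_of_val_eq' (h.trans rfl))
        · refine Or.inr (Or.inl ⟨by rw [heq]; rfl, by rw [heq]; rfl⟩)
      · rw [hpv] at hw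
        injection hw with hw
        rw [← hw] at hflag hcase
        refine Or.inr (Or.inr ⟨by rw [hflag]; rfl, ?_⟩)
        rcases hcase with ⟨h1, h2⟩ | ⟨h1, h2⟩ | ⟨h1, h2, h3⟩ | ⟨h1, h2, h3⟩ | ⟨h1, h2, h3⟩ | ⟨h1, h2, h3⟩
        · exact Or.inl ⟨by rw [h1]; rfl, by rw [h2]; rfl⟩
        · exact Or.inr (Or.inl ⟨by rw [h1]; rfl, by rw [h2]; rfl⟩)
        · exact absurd h3 (not_lt.mpr hst.le)
        · exact Or.inr (Or.inr (Or.inl ⟨by rw [h1]; rfl, by rw [h2]; rfl⟩))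
        · exact Or.inr (Or.inr (Or.inr ⟨by rw [h1]; rfl, by rw [h2]; rfl⟩))
        · exact absurd h3 (not_lt.mpr hst.le)

lemma inv1_base {G : SimpleGraph V} (C : Config V) (A : V → Option (Rule V)) (s t : V)
    (hst : s < t) (helig : ∀ u R, A u = some R → eligible G C u R)
    (hr : A s = some (Rule.write t) ∨ A s = some (Rule.seduction t) ∨
      A s = some (Rule.marriage t) ∨
      ((A s = some Rule.increase ∨ A s = some Rule.reset) ∧ C.p s = some t)) :
    inv1 (absC (step C A) s t) = true :=
  F1 ⟨pEnc (C.p s) t, pEnc_lt _ _⟩ ⟨(C.m s).val, (C.m s).isLt⟩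
    ⟨fEnc (C.r s t).1, fEnc_lt _⟩ ⟨((C.r s t).2).val, ((C.r s t).2).isLt⟩
    ⟨pEnc (C.p t) s, pEnc_lt _ _⟩ ⟨(C.m t).val, (C.m t).isLt⟩
    ⟨fEnc (C.r t s).1, fEnc_lt _⟩ ⟨((C.r t s).2).val, ((C.r t s).2).isLt⟩
    (sPart (step C A) s t) (sPart_step_trule C A s t hst helig hr)
    (tPart (step C A) s t) (tPart_step_mem C A s t hst helig)

lemma inv1_step {G : SimpleGraph V} (C : Config V) (A : V → Option (Rule V)) (s t : V)
    (hst : s < t) (helig : ∀ u R, A u = some R → eligible G C u R)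
    (h : inv1 (absC C s t) = true) :
    inv1 (absC (step C A) s t) = true :=
  F2 ⟨pEnc (C.p s) t, pEnc_lt _ _⟩ ⟨(C.m s).val, (C.m s).isLt⟩
    ⟨fEnc (C.r s t).1, fEnc_lt _⟩ ⟨((C.r s t).2).val, ((C.r s t).2).isLt⟩
    ⟨pEnc (C.p t) s, pEnc_lt _ _⟩ ⟨(C.m t).val, (C.m t).isLt⟩
    ⟨fEnc (C.r t s).1, fEnc_lt _⟩ ⟨((C.r t s).2).val, ((C.r t s).2).isLt⟩
    h (sPart (step C A) s t) (sPart_step_mem C A s t hst helig)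
    (tPart (step C A) s t) (tPart_step_mem C A s t hst helig)

lemma inv2_base {G : SimpleGraph V} (C : Config V) (A : V → Option (Rule V)) (s t : V)
    (hst : s < t) (helig : ∀ u R, A u = some R → eligible G C u R)
    (hA : A t = some Rule.reset)
    (h : inv1 (absC C s t) = true) :
    inv2 (absC (step C A) s t) = true :=
  F3 ⟨pEnc (C.p s) t, pEnc_lt _ _⟩ ⟨(C.m s).val, (C.m s).isLt⟩
    ⟨fEnc (C.r s t).1, fEnc_lt _⟩ ⟨((C.r s t).2).val, ((C.r s t).2).isLt⟩
    ⟨pEnc (C.p t) s, pEnc_lt _ _⟩ ⟨(C.m t).val, (C.m t).isLt⟩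
    ⟨fEnc (C.r t s).1, fEnc_lt _⟩ ⟨((C.r t s).2).val, ((C.r t s).2).isLt⟩
    h (sPart (step C A) s t) (sPart_step_mem C A s t hst helig)
    (tPart (step C A) s t) (tReset_core C A s t hst helig hA)

lemma inv2_step {G : SimpleGraph V} (C : Config V) (A : V → Option (Rule V)) (s t : V)
    (hst : s < t) (helig : ∀ u R, A u = some R → eligible G C u R)
    (h : inv2 (absC C s t) = true) :
    inv2 (absC (step C A) s t) = true :=
  F4 ⟨pEnc (C.p s) t, pEnc_lt _ _⟩ ⟨(C.m s).val, (C.m s).isLt⟩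
    ⟨fEnc (C.r s t).1, fEnc_lt _⟩ ⟨((C.r s t).2).val, ((C.r s t).2).isLt⟩
    ⟨pEnc (C.p t) s, pEnc_lt _ _⟩ ⟨(C.m t).val, (C.m t).isLt⟩
    ⟨fEnc (C.r t s).1, fEnc_lt _⟩ ⟨((C.r t s).2).val, ((C.r t s).2).isLt⟩
    h (sPart (step C A) s t) (sPart_step_mem C A s t hst helig)
    (tPart (step C A) s t) (tPart_step_mem C A s t hst helig)

lemma inv2_final (C : Config V) (s t : V)
    (h : inv2 (absC C s t) = true) (hp : C.p t = some s) (hm : C.m t = 2) :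
    C.p s = some t ∧ C.m s = 2 ∧ C.r s t = (RegFlag.You, 2) ∧
      ((C.r t s) = (RegFlag.You, 1) ∨ (C.r t s) = (RegFlag.You, 2)) := by
  obtain ⟨ha, hb, hc, hd, hg, hh⟩ :=
    F5 ⟨pEnc (C.p s) t, pEnc_lt _ _⟩ ⟨(C.m s).val, (C.m s).isLt⟩
      ⟨fEnc (C.r s t).1, fEnc_lt _⟩ ⟨((C.r s t).2).val, ((C.r s t).2).isLt⟩
      ⟨pEnc (C.p t) s, pEnc_lt _ _⟩ ⟨(C.m t).val, (C.m t).isLt⟩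
      ⟨fEnc (C.r t s).1, fEnc_lt _⟩ ⟨((C.r t s).2).val, ((C.r t s).2).isLt⟩
      h (by show pEnc (C.p t) s = 1; rw [hp]; exact pEnc_some_eq s)
      (by show (C.m t).val = 2; rw [hm]; rfl)
  have ha' : pEnc (C.p s) t = 1 := ha
  have hb' : (C.m s).val = 2 := hb
  have hc' : fEnc (C.r s t).1 = 1 := hc
  have hd' : ((C.r s t).2).val = 2 := hd
  have hg' : fEnc (C.r t s).1 = 1 := hg
  have hh' : ((C.r t s).2).val = 1 ∨ ((C.r t s).2).val = 2 := hh
  refine ⟨pEnc_eq_one ha', eq_of_val_eq' (by rw [hb']; rfl), ?_, ?_⟩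
  · exact Prod.ext_iff.mpr ⟨fEnc_eq_one hc', eq_of_val_eq' (by rw [hd']; rfl)⟩
  · rcases hh' with hh' | hh'
    · exact Or.inl (Prod.ext_iff.mpr ⟨fEnc_eq_one hg', eq_of_val_eq' (by rw [hh']; rfl)⟩)
    · exact Or.inr (Prod.ext_iff.mpr ⟨fEnc_eq_one hg', eq_of_val_eq' (by rw [hh']; rfl)⟩)

end Bridge

end Stmt15Aux

/-- Let `(s,t)` be an edge with `s < t`.  If `s` executes a
`t`-rule in transition `i`, then `t` executes a `Reset` in transition `j`
(`i + 1 ≤ j`), and `(p_t,m_t) = (s,2)` in `A_4 = conf l` (`j + 1 ≤ l ≤ T`),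
then the edge `(s,t)` is in a correct state in `A_4`. -/
theorem stmt_15 {V : Type} [Fintype V] [LinearOrder V] (G : SimpleGraph V)
    (s t : V) (hadj : G.Adj s t) (hst : s < t) (E : Execution G)
    (i j l : ℕ) (hij : i + 1 ≤ j) (hjl : j + 1 ≤ l) (hlT : l ≤ E.T)
    (hi : execVRule E i s t)
    (hjT : j < E.T) (hj : E.act j t = some Rule.reset)
    (hlp : (E.conf l).p t = some s) (hlm : (E.conf l).m t = 2) :
    ∃ α β, correctState (E.conf l) s t α β := by
  classical
  obtain ⟨hiT, hrule⟩ := hi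
  have chain1 : ∀ k, i + 1 ≤ k → k ≤ j →
      Stmt15Aux.inv1 (Stmt15Aux.absC (E.conf k) s t) = true := by
    intro k hk1
    induction k, hk1 using Nat.le_induction with
    | base =>
        intro _
        rw [E.conf_succ i hiT]
        exact Stmt15Aux.inv1_base (E.conf i) (E.act i) s t hst (E.act_eligible i hiT) hrule
    | succ n hn ih =>
        intro hk2
        have hnT : n < E.T := lt_of_lt_of_le (by omega) (le_of_lt hjT)
        rw [E.conf_succ n hnT]
        exact Stmt15Aux.inv1_step (E.conf n) (E.act n) s t hst (E.act_eligible n hnT)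
          (ih (by omega))
  have chain2 : ∀ k, j + 1 ≤ k → k ≤ l →
      Stmt15Aux.inv2 (Stmt15Aux.absC (E.conf k) s t) = true := by
    intro k hk1
    induction k, hk1 using Nat.le_induction with
    | base =>
        intro _
        rw [E.conf_succ j hjT]
        exact Stmt15Aux.inv2_base (E.conf j) (E.act j) s t hst (E.act_eligible j hjT) hj
          (chain1 j hij le_rfl)
    | succ n hn ih =>
        intro hk2
        have hnT : n < E.T := lt_of_lt_of_le (by omega) hlT
        rw [E.conf_succ n hnT]
        exact Stmt15Aux.inv2_step (E.conf n) (E.act n) s t hst (E.act_eligible n hnT)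
          (ih (by omega))
  obtain ⟨hps, hms, hrst, hrts⟩ :=
    Stmt15Aux.inv2_final (E.conf l) s t (chain2 l hjl le_rfl) hlp hlm
  refine ⟨2, 2, ?_⟩
  rcases hrts with hrts | hrts
  · right
    refine ⟨⟨hps, hlp, hms, hlm⟩, Or.inl ⟨Or.inr rfl, by rw [hrst], ?_⟩⟩
    rw [hrts]
    decide
  · left
    exact ⟨⟨hps, hlp, hms, hlm⟩, by rw [hrst], by rw [hrts],
      Or.inr (Or.inr (Or.inr (Or.inr rfl)))⟩
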